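/- arXiv:1609.04101 — 2 statements merged into one kernel-verified Lean document; each statement's English description precedes it below -/
import Mathlib

section
/- (Robustness of p-equivalence) For any regular language L over A, the following three conditions are equivalent: (1) μ(L) = 0; (2) μ*(L) = 0; (3) δ(L) = 0. -/
open Filter

/-- `mu L n` is the probability that a uniformly random string of length `n` lies in `L`. -/
noncomputable def mu {A : Type*} [Fintype A] (L : Set (List A)) (n : ℕ) : ℝ :=
  (Nat.card {s : List A // s.length = n ∧ s ∈ L} : ℝ) / (Fintype.card A : ℝ) ^ n

/-- Symmetric difference of two languages. -/
def sdiffL {A : Type*} (L₁ L₂ : Set (List A)) : Set (List A) := (L₁ \ L₂) ∪ (L₂ \ L₁)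

/-- `L₁ ≃_p L₂` : the probability of the symmetric difference tends to `0`. -/
def pEquiv {A : Type*} [Fintype A] (L₁ L₂ : Set (List A)) : Prop :=
  Filter.Tendsto (mu (sdiffL L₁ L₂)) Filter.atTop (nhds 0)

/-- A language is regular if it is accepted by a DFA with finitely many states. -/
def IsRegularLang {A : Type*} (L : Set (List A)) : Prop :=
  ∃ (σ : Type) (_ : Fintype σ) (M : DFA A σ), L = {s : List A | M.eval s ∈ M.accept}

/-- `muStar L n` : the probability that a uniformly random string of length `< n` lies in `L`. -/
noncomputable def muStar {A : Type*} [Fintype A] (L : Set (List A)) (n : ℕ) : ℝ :=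
  (Nat.card {s : List A // s.length < n ∧ s ∈ L} : ℝ) /
    (∑ k ∈ Finset.range n, (Fintype.card A : ℝ) ^ k)

/-- `delta L n` : the Cesàro mean `(1/n) ∑_{k=0}^{n-1} μ_k(L)`. -/
noncomputable def delta {A : Type*} [Fintype A] (L : Set (List A)) (n : ℕ) : ℝ :=
  (∑ k ∈ Finset.range n, mu L k) / n

/-!
From every state, a uniformly random word of bounded length leads into a recurrent state (one
lying in a bottom strongly connected component) with probability bounded below, and recurrent
states never lead back out; so the probability of being in a transient state after `n` letters
decays geometrically. If a recurrent accepting state is reached with positive probability at some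
length, recurrence makes it be revisited, in every later window of bounded length, with
probability at least a fixed `β > 0`; this keeps the Cesàro means `δ_n` away from `0`. Hence
`δ(L) = 0` bounds `μ_n(L)` by the transient probability, which tends to `0`.

The implications `μ → μ* → δ` need no regularity: `μ*_n` is the average of the `μ_k` with
weights `|A|^k`, and for `|A| ≥ 2` we have `μ_n ≤ 2 μ*_{n+1}`, while for `|A| = 1`, `μ* = δ`.
-/

open Topology Finset

instance List.finite_length_eq_and {A : Type*} [Finite A] (n : ℕ) (P : List A → Prop) :
    Finite {w : List A // w.length = n ∧ P w} :=
  ((List.finite_length_eq A n).subset fun _ hw => hw.1).to_subtype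

section Words

variable {A : Type*} [Fintype A]

theorem card_length_eq (n : ℕ) : Nat.card {w : List A // w.length = n} = Fintype.card A ^ n :=
  (Nat.card_eq_fintype_card (α := List.Vector A n)).trans (card_vector n)

theorem card_length_lt_and (P : List A → Prop) (n : ℕ) :
    Nat.card {w : List A // w.length < n ∧ P w} =
      ∑ k ∈ range n, Nat.card {w : List A // w.length = k ∧ P w} := by
  let e : {w : List A // w.length < n ∧ P w} ≃ Σ k : Fin n, {w : List A // w.length = k ∧ P w} :=
    { toFun := fun w => ⟨⟨w.1.length, w.2.1⟩, w.1, rfl, w.2.2⟩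
      invFun := fun w => ⟨w.2.1, w.2.2.1.symm ▸ w.1.2, w.2.2.2⟩
      left_inv := fun _ => rfl
      right_inv := fun w => Sigma.subtype_ext (Fin.ext w.2.2.1) rfl }
  rw [Nat.card_congr e, Nat.card_sigma]
  exact Fin.sum_univ_eq_sum_range (fun k => Nat.card {w : List A // w.length = k ∧ P w}) n

theorem mu_nonneg (L : Set (List A)) (n : ℕ) : 0 ≤ mu L n := by
  unfold mu; positivity

theorem mu_le_one (L : Set (List A)) (n : ℕ) : mu L n ≤ 1 := by
  refine div_le_one_of_le₀ ?_ (by positivity)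
  rw [← Nat.cast_pow, ← card_length_eq, Nat.cast_le]
  have : Finite {w : List A // w.length = n} := (List.finite_length_eq A n).to_subtype
  exact Nat.card_le_card_of_injective (fun w => ⟨w.1, w.2.1⟩)
    fun _ _ h => Subtype.ext (congrArg Subtype.val h :)

theorem mu_mono {L L' : Set (List A)} (h : L ⊆ L') (n : ℕ) : mu L n ≤ mu L' n := by
  unfold mu
  gcongr
  exact Nat.card_le_card_of_injective (fun w => ⟨w.1, w.2.1, h w.2.2⟩)
    fun _ _ hw => Subtype.ext (congrArg Subtype.val hw :)

variable [Nonempty A]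

theorem muStar_eq (L : Set (List A)) (n : ℕ) :
    muStar L n = (∑ k ∈ range n, mu L k * (Fintype.card A : ℝ) ^ k) /
      ∑ k ∈ range n, (Fintype.card A : ℝ) ^ k := by
  have hK : (Fintype.card A : ℝ) ≠ 0 := by positivity
  simp only [muStar, mu, card_length_lt_and (· ∈ L), Nat.cast_sum]
  congr 1
  exact sum_congr rfl fun k _ => (div_mul_cancel₀ _ (pow_ne_zero k hK)).symm

theorem tendsto_muStar_of_tendsto_mu {L : Set (List A)} (h : Tendsto (mu L) atTop (𝓝 0)) :
    Tendsto (muStar L) atTop (𝓝 0) := by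
  have hK : (1 : ℝ) ≤ Fintype.card A := mod_cast Fintype.card_pos
  have hw : Tendsto (fun n => ∑ k ∈ range n, (Fintype.card A : ℝ) ^ k) atTop atTop :=
    tendsto_atTop_mono (fun n => by
      simpa using sum_le_sum fun k (_ : k ∈ range n) => one_le_pow₀ (n := k) hK)
      tendsto_natCast_atTop_atTop
  have ho : (fun k => mu L k * (Fintype.card A : ℝ) ^ k) =o[atTop]
      fun k => (Fintype.card A : ℝ) ^ k :=
    ((Asymptotics.isLittleO_one_iff ℝ).mpr h).mul_isBigO (Asymptotics.isBigO_refl _ _)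
      |>.congr_right fun _ => one_mul _
  rw [show muStar L = _ from funext (muStar_eq L)]
  exact (ho.sum_range (fun k => by positivity) hw).tendsto_div_nhds_zero

theorem mu_le_two_mul_muStar_succ (hA : 2 ≤ Fintype.card A) (L : Set (List A)) (n : ℕ) :
    mu L n ≤ 2 * muStar L (n + 1) := by
  have hgeom : ∑ k ∈ range (n + 1), (Fintype.card A : ℝ) ^ k ≤ 2 * (Fintype.card A : ℝ) ^ n := by
    have : ∑ k ∈ range n, Fintype.card A ^ k < Fintype.card A ^ n := Nat.geomSum_lt hA (by simp)
    rw [sum_range_succ, two_mul]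
    exact add_le_add_left (mod_cast this.le) _
  set K : ℝ := (Fintype.card A : ℝ)
  set S := ∑ k ∈ range (n + 1), mu L k * K ^ k
  have hK : 0 < K ^ n := by positivity
  have hS : mu L n * K ^ n ≤ S :=
    single_le_sum (f := fun k => mu L k * K ^ k) (fun k _ => by have := mu_nonneg L k; positivity)
      (self_mem_range_succ n)
  have hW : 0 < ∑ k ∈ range (n + 1), K ^ k :=
    sum_pos (fun k _ => by positivity) nonempty_range_add_one
  rw [muStar_eq]
  calc mu L n ≤ S / K ^ n := (le_div_iff₀ hK).mpr hS
    _ ≤ S / ((∑ k ∈ range (n + 1), K ^ k) / 2) :=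
      div_le_div_of_nonneg_left ((mul_nonneg (mu_nonneg L n) hK.le).trans hS) (half_pos hW)
        (by linarith)
    _ = 2 * (S / ∑ k ∈ range (n + 1), K ^ k) := by field_simp

theorem delta_eq_muStar_of_card_eq_one (hA : Fintype.card A = 1) (L : Set (List A)) (n : ℕ) :
    delta L n = muStar L n := by
  simp [delta, muStar_eq, hA]

theorem tendsto_delta_of_tendsto_muStar {L : Set (List A)} (h : Tendsto (muStar L) atTop (𝓝 0)) :
    Tendsto (delta L) atTop (𝓝 0) := by
  rcases (Nat.one_le_iff_ne_zero.mpr Fintype.card_ne_zero : 1 ≤ Fintype.card A).eq_or_lt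
    with hA | hA
  · exact h.congr fun n => (delta_eq_muStar_of_card_eq_one hA.symm L n).symm
  · have hmu : Tendsto (mu L) atTop (𝓝 0) :=
      squeeze_zero (mu_nonneg L) (mu_le_two_mul_muStar_succ hA L)
        (by simpa using (h.comp (tendsto_add_atTop_nat 1)).const_mul 2)
    exact hmu.cesaro.congr fun n => by simp [delta, div_eq_inv_mul]

end Words

theorem tendsto_zero_of_antitone_of_le_mul {u : ℕ → ℝ} {c : ℝ} {t : ℕ} (hu : Antitone u)
    (h0 : ∀ n, 0 ≤ u n) (hc : c < 1) (h : ∀ n, u (n + t) ≤ c * u n) : Tendsto u atTop (𝓝 0) := by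
  have hlim := tendsto_atTop_ciInf hu ⟨0, by rintro _ ⟨n, rfl⟩; exact h0 n⟩
  have hle : ⨅ n, u n ≤ c * ⨅ n, u n :=
    le_of_tendsto_of_tendsto' (hlim.comp (tendsto_add_atTop_nat t)) (hlim.const_mul c) h
  have hinf : 0 ≤ ⨅ n, u n := le_ciInf h0
  rwa [show ⨅ n, u n = 0 by nlinarith] at hlim

theorem not_tendsto_cesaro_zero_of_le_sum_range {u : ℕ → ℝ} (hu : ∀ n, 0 ≤ u n) {N t : ℕ} {β : ℝ}
    (hβ : 0 < β) (h : ∀ m, N ≤ m → β ≤ ∑ j ∈ range t, u (m + j)) :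
    ¬ Tendsto (fun n => (∑ k ∈ range n, u k) / n) atTop (𝓝 0) := by
  intro hlim
  have ht : t ≠ 0 := by rintro rfl; simpa using hβ.trans_le (h N le_rfl)
  have hblocks : ∀ r : ℕ, r * β ≤ ∑ k ∈ range (N + r * t), u k := by
    intro r
    induction r with
    | zero => simpa using sum_nonneg fun k _ => hu k
    | succ r ih =>
      rw [add_mul, one_mul, ← add_assoc, sum_range_add]
      have := h (N + r * t) (Nat.le_add_right _ _)
      push_cast
      linarith
  have hsub : Tendsto (fun r => N + r * t) atTop atTop :=
    tendsto_atTop_mono (fun r => (Nat.le_mul_of_pos_right r (Nat.pos_of_ne_zero ht)).trans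
      (Nat.le_add_left _ _)) tendsto_id
  obtain ⟨r, hr, hNr⟩ := ((hlim.comp hsub).eventually
    (gt_mem_nhds (div_pos hβ (by positivity : (0 : ℝ) < 2 * t)))).and
    (eventually_gt_atTop N) |>.exists
  have hn : N + r * t ≤ 2 * r * t := by nlinarith [Nat.pos_of_ne_zero ht]
  have hn' : ((N + r * t : ℕ) : ℝ) ≤ 2 * r * t := mod_cast hn
  have hpos : (0 : ℝ) < (N + r * t : ℕ) :=
    Nat.cast_pos.mpr (Nat.add_pos_right _ (Nat.mul_pos (by omega) (Nat.pos_of_ne_zero ht)))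
  simp only [Function.comp_apply, div_lt_div_iff₀ hpos (by positivity : (0 : ℝ) < 2 * t)] at hr
  nlinarith [hblocks r]

namespace DFA

variable {A σ : Type*} (M : DFA A σ)

theorem card_evalFrom_add [Fintype A] [Fintype σ] (q : σ) (S : Set σ) (n m : ℕ) :
    Nat.card {w : List A // w.length = n + m ∧ M.evalFrom q w ∈ S} =
      ∑ g, Nat.card {x : List A // x.length = n ∧ M.evalFrom q x = g} *
        Nat.card {y : List A // y.length = m ∧ M.evalFrom g y ∈ S} := by
  let e : (Σ g : σ, {x : List A // x.length = n ∧ M.evalFrom q x = g} ×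
        {y : List A // y.length = m ∧ M.evalFrom g y ∈ S}) ≃
      {w : List A // w.length = n + m ∧ M.evalFrom q w ∈ S} := by
    refine .ofBijective (fun ⟨_, x, y⟩ => ⟨x.1 ++ y.1, by simp [x.2.1, y.2.1], by
      rw [evalFrom_of_append, x.2.2]; exact y.2.2⟩) ⟨?_, fun w => ?_⟩
    · rintro ⟨_, ⟨x₁, hx₁, rfl⟩, ⟨y₁, _⟩⟩ ⟨_, ⟨x₂, hx₂, rfl⟩, ⟨y₂, _⟩⟩ h
      obtain ⟨rfl, rfl⟩ := List.append_inj (congrArg Subtype.val h :) (hx₁.trans hx₂.symm)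
      rfl
    · refine ⟨⟨_, ⟨w.1.take n, by simp [w.2.1], rfl⟩, ⟨w.1.drop n, by simp [w.2.1], ?_⟩⟩,
        Subtype.ext (List.take_append_drop n w.1)⟩
      rw [← evalFrom_of_append, List.take_append_drop]
      exact w.2.2
  rw [← Nat.card_congr e, Nat.card_sigma]
  simp only [Nat.card_prod]

section EvalProb

variable [Fintype A]

noncomputable def evalProb (q : σ) (S : Set σ) (n : ℕ) : ℝ := mu {w | M.evalFrom q w ∈ S} n

theorem evalProb_nonneg (q : σ) (S : Set σ) (n : ℕ) : 0 ≤ M.evalProb q S n := mu_nonneg _ n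

theorem evalProb_le_one (q : σ) (S : Set σ) (n : ℕ) : M.evalProb q S n ≤ 1 := mu_le_one _ n

theorem evalProb_add [Fintype σ] (q : σ) (S : Set σ) (n m : ℕ) :
    M.evalProb q S (n + m) = ∑ g, M.evalProb q {g} n * M.evalProb g S m := by
  simp only [evalProb, mu, Set.mem_ofPred_eq, Set.mem_singleton_iff, card_evalFrom_add, pow_add,
    Nat.cast_sum, Nat.cast_mul, sum_div, div_mul_div_comm]

theorem evalProb_zero (q : σ) (S : Set σ) : M.evalProb q S 0 = S.indicator 1 q := by
  by_cases h : q ∈ S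
  · rw [Set.indicator_of_mem h, evalProb, mu, pow_zero, div_one, Pi.one_apply, Nat.cast_eq_one,
      Nat.card_eq_one_iff_exists]
    exact ⟨⟨[], rfl, h⟩, fun ⟨_, hw, _⟩ => Subtype.ext (List.eq_nil_of_length_eq_zero hw)⟩
  · rw [Set.indicator_of_notMem h, evalProb, mu, pow_zero, div_one, Nat.cast_eq_zero,
      Nat.card_eq_zero]
    exact .inl ⟨fun ⟨_, hw, hS⟩ => h (by rwa [List.eq_nil_of_length_eq_zero hw] at hS)⟩

theorem evalProb_eq_sum [Fintype σ] (q : σ) (S : Set σ) (n : ℕ) :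
    M.evalProb q S n = ∑ g, M.evalProb q {g} n * S.indicator 1 g := by
  simpa [evalProb_zero] using M.evalProb_add q S n 0

theorem evalProb_eq_zero {q : σ} {S : Set σ} {n : ℕ}
    (h : ∀ w : List A, w.length = n → M.evalFrom q w ∉ S) : M.evalProb q S n = 0 := by
  rw [evalProb, mu, Nat.card_eq_zero.mpr (.inl ⟨fun w => h w.1 w.2.1 w.2.2⟩), Nat.cast_zero,
    zero_div]

theorem evalProb_eq_one [Nonempty A] {q : σ} {S : Set σ} {n : ℕ}
    (h : ∀ w : List A, w.length = n → M.evalFrom q w ∈ S) : M.evalProb q S n = 1 := by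
  rw [evalProb, mu, Nat.card_congr (Equiv.subtypeEquivRight (q := (·.length = n))
      fun w => and_iff_left_of_imp (b := w ∈ {w | M.evalFrom q w ∈ S}) (h w)),
    card_length_eq, Nat.cast_pow, div_self (by positivity)]

theorem inv_pow_le_evalProb {q : σ} {S : Set σ} (w : List A) (hS : M.evalFrom q w ∈ S) :
    ((Fintype.card A : ℝ) ^ w.length)⁻¹ ≤ M.evalProb q S w.length := by
  have : Nonempty {v : List A // v.length = w.length ∧ v ∈ {v | M.evalFrom q v ∈ S}} :=
    ⟨⟨w, rfl, hS⟩⟩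
  rw [evalProb, mu, inv_eq_one_div]
  exact div_le_div_of_nonneg_right (mod_cast Nat.card_pos) (by positivity)

theorem evalProb_add_evalProb_compl [Fintype σ] [Nonempty A] (q : σ) (S : Set σ) (n : ℕ) :
    M.evalProb q S n + M.evalProb q Sᶜ n = 1 := by
  rw [evalProb_eq_sum, evalProb_eq_sum, ← sum_add_distrib, ← M.evalProb_eq_one (q := q) (n := n)
    (S := .univ) (fun _ _ => trivial), evalProb_eq_sum]
  simp only [← mul_add, Set.indicator_self_add_compl_apply, Set.indicator_univ]

end EvalProb

section Recurrence

def Reaches (p q : σ) : Prop := ∃ w, M.evalFrom p w = q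

def IsRecurrent (q : σ) : Prop := ∀ r, M.Reaches q r → M.Reaches r q

theorem reaches_refl (q : σ) : M.Reaches q q := ⟨[], rfl⟩

theorem reaches_evalFrom (q : σ) (w : List A) : M.Reaches q (M.evalFrom q w) := ⟨w, rfl⟩

variable {M}

theorem Reaches.trans {p q r : σ} (h₁ : M.Reaches p q) (h₂ : M.Reaches q r) : M.Reaches p r := by
  obtain ⟨u, rfl⟩ := h₁
  obtain ⟨v, rfl⟩ := h₂
  exact ⟨u ++ v, evalFrom_of_append ..⟩

theorem IsRecurrent.evalFrom {q : σ} (h : M.IsRecurrent q) (w : List A) :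
    M.IsRecurrent (M.evalFrom q w) :=
  fun r hr => (h r ((M.reaches_evalFrom q w).trans hr)).trans (M.reaches_evalFrom q w)

variable (M)

theorem exists_isRecurrent_evalFrom [Fintype σ] (q : σ) : ∃ w, M.IsRecurrent (M.evalFrom q w) := by
  classical
  let reach (p : σ) : Finset σ := univ.filter (M.Reaches p)
  have mem_reach {p r : σ} : r ∈ reach p ↔ M.Reaches p r := by simp [reach]
  -- a state reachable from `q` whose reachable set is as small as possible is recurrent
  obtain ⟨r, hqr, hmin⟩ := (reach q).exists_min_image (fun p => (reach p).card)
    ⟨q, mem_reach.mpr (M.reaches_refl q)⟩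
  obtain ⟨w, rfl⟩ := mem_reach.mp hqr
  refine ⟨w, fun s hs => mem_reach.mp ?_⟩
  have hsub : reach s ⊆ reach (M.evalFrom q w) :=
    fun x hx => mem_reach.mpr (hs.trans (mem_reach.mp hx))
  rw [eq_of_subset_of_card_le hsub (hmin s (mem_reach.mpr ((mem_reach.mp hqr).trans hs)))]
  exact mem_reach.mpr (M.reaches_refl _)

end Recurrence

section Dynamics

variable [Fintype A] [Fintype σ]

theorem evalProb_add_le_mul {S : Set σ} (hS : ∀ g ∉ S, ∀ w, M.evalFrom g w ∉ S) {m : ℕ} {c : ℝ}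
    (h : ∀ g ∈ S, M.evalProb g S m ≤ c) (q : σ) (n : ℕ) :
    M.evalProb q S (n + m) ≤ c * M.evalProb q S n := by
  rw [evalProb_add, evalProb_eq_sum, mul_sum]
  refine sum_le_sum fun g _ => ?_
  rw [mul_left_comm]
  refine mul_le_mul_of_nonneg_left ?_ (M.evalProb_nonneg _ _ _)
  by_cases hg : g ∈ S
  · simpa [hg] using h g hg
  · simp [hg, M.evalProb_eq_zero fun w _ => hS g hg w]

theorem tendsto_evalProb_not_isRecurrent [Nonempty A] (q : σ) :
    Tendsto (M.evalProb q {g | ¬ M.IsRecurrent g}) atTop (𝓝 0) := by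
  set T := {g | ¬ M.IsRecurrent g}
  have hT : ∀ g ∉ T, ∀ w, M.evalFrom g w ∉ T :=
    fun g hg w => not_not.mpr ((not_not.mp hg).evalFrom w)
  choose w hw using M.exists_isRecurrent_evalFrom
  obtain ⟨t, ht⟩ := Finite.bddAbove_range fun g => (w g).length
  have hescape : ∀ g ∈ T, M.evalProb g T t ≤ 1 - ((Fintype.card A : ℝ) ^ t)⁻¹ := by
    intro g _
    let a := Classical.arbitrary A
    have hlen : (w g ++ List.replicate (t - (w g).length) a).length = t := by
      have := ht (Set.mem_range_self g)
      simp only [List.length_append, List.length_replicate]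
      omega
    have hrec := M.inv_pow_le_evalProb (S := Tᶜ) (w g ++ List.replicate (t - (w g).length) a)
      (by simpa [T, evalFrom_of_append] using (hw g).evalFrom _)
    rw [hlen] at hrec
    linarith [M.evalProb_add_evalProb_compl g T t]
  refine tendsto_zero_of_antitone_of_le_mul ?_ (M.evalProb_nonneg q T) ?_
    (M.evalProb_add_le_mul hT hescape q)
  · exact antitone_nat_of_succ_le fun n => by
      simpa using M.evalProb_add_le_mul hT (fun g _ => M.evalProb_le_one g T 1) q n
  · simp only [sub_lt_self_iff, inv_pos]
    positivity

variable [Nonempty A]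

theorem evalProb_singleton_le_evalProb_add {C : Set σ} {f : σ} (hC : ∀ w, M.evalFrom f w ∈ C)
    (q : σ) (N i : ℕ) : M.evalProb q {f} N ≤ M.evalProb q C (N + i) := by
  rw [evalProb_add]
  calc M.evalProb q {f} N = M.evalProb q {f} N * M.evalProb f C i := by
        rw [M.evalProb_eq_one fun w _ => hC w, mul_one]
    _ ≤ _ := single_le_sum (f := fun g => M.evalProb q {g} N * M.evalProb g C i)
        (fun g _ => mul_nonneg (M.evalProb_nonneg _ _ _) (M.evalProb_nonneg _ _ _)) (mem_univ f)

theorem exists_inv_pow_mul_evalProb_le_sum {C : Set σ} {f : σ} (hC : ∀ g ∈ C, M.Reaches g f) :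
    ∃ t, ∀ q m, ((Fintype.card A : ℝ) ^ t)⁻¹ * M.evalProb q C m ≤
      ∑ j ∈ range (t + 1), M.evalProb q {f} (m + j) := by
  have hK : (1 : ℝ) ≤ Fintype.card A := mod_cast Fintype.card_pos
  set K : ℝ := (Fintype.card A : ℝ)
  choose v hv using hC
  obtain ⟨t, ht⟩ := Finite.bddAbove_range fun g : C => (v g g.2).length
  have hreturn : ∀ g, (K ^ t)⁻¹ * C.indicator 1 g ≤ ∑ j ∈ range (t + 1), M.evalProb g {f} j := by
    intro g
    by_cases hg : g ∈ C
    · have hlen : (v g hg).length ≤ t := ht ⟨⟨g, hg⟩, rfl⟩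
      calc (K ^ t)⁻¹ * C.indicator 1 g = (K ^ t)⁻¹ := by simp [hg]
        _ ≤ (K ^ (v g hg).length)⁻¹ := inv_anti₀ (by positivity) (pow_le_pow_right₀ hK hlen)
        _ ≤ M.evalProb g {f} (v g hg).length := M.inv_pow_le_evalProb _ (hv g hg)
        _ ≤ _ := single_le_sum (f := (M.evalProb g {f} ·)) (fun j _ => M.evalProb_nonneg _ _ _)
          (mem_range.mpr (Nat.lt_succ_of_le hlen))
    · simpa [hg] using sum_nonneg fun j _ => M.evalProb_nonneg g {f} j
  refine ⟨t, fun q m => ?_⟩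
  calc (K ^ t)⁻¹ * M.evalProb q C m
      = ∑ g, M.evalProb q {g} m * ((K ^ t)⁻¹ * C.indicator 1 g) := by
        rw [evalProb_eq_sum, mul_sum]
        exact sum_congr rfl fun g _ => by ring
    _ ≤ ∑ g, M.evalProb q {g} m * ∑ j ∈ range (t + 1), M.evalProb g {f} j :=
        sum_le_sum fun g _ => mul_le_mul_of_nonneg_left (hreturn g) (M.evalProb_nonneg _ _ _)
    _ = _ := by simp only [evalProb_add, mul_sum]; rw [sum_comm]

theorem evalProb_eq_zero_of_tendsto_delta {q : σ} {S : Set σ}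
    (hδ : Tendsto (delta {w | M.evalFrom q w ∈ S}) atTop (𝓝 0)) {f : σ} (hfS : f ∈ S)
    (hf : M.IsRecurrent f) (N : ℕ) : M.evalProb q {f} N = 0 := by
  obtain ⟨t, ht⟩ := M.exists_inv_pow_mul_evalProb_le_sum (C := {g | M.Reaches f g}) hf
  -- each window of `t + 1` lengths after `N` then carries `μ`-mass at least `β`
  by_contra hne
  have hβ : 0 < ((Fintype.card A : ℝ) ^ t)⁻¹ * M.evalProb q {f} N :=
    mul_pos (by positivity) ((M.evalProb_nonneg _ _ _).lt_of_ne' hne)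
  refine not_tendsto_cesaro_zero_of_le_sum_range (N := N) (t := t + 1) (fun n => mu_nonneg _ n)
    hβ (fun m hm => ?_) hδ
  obtain ⟨i, rfl⟩ := Nat.exists_eq_add_of_le hm
  calc _ ≤ ((Fintype.card A : ℝ) ^ t)⁻¹ * M.evalProb q {g | M.Reaches f g} (N + i) :=
        mul_le_mul_of_nonneg_left
          (M.evalProb_singleton_le_evalProb_add (M.reaches_evalFrom f) q N i) (by positivity)
    _ ≤ ∑ j ∈ range (t + 1), M.evalProb q {f} (N + i + j) := ht q (N + i)
    _ ≤ _ := sum_le_sum fun j _ =>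
        mu_mono (fun w (hw : M.evalFrom q w = f) => show M.evalFrom q w ∈ S from hw ▸ hfS) _

theorem tendsto_evalProb_of_tendsto_delta {q : σ} {S : Set σ}
    (hδ : Tendsto (delta {w | M.evalFrom q w ∈ S}) atTop (𝓝 0)) :
    Tendsto (M.evalProb q S) atTop (𝓝 0) := by
  refine squeeze_zero (M.evalProb_nonneg q S) (fun n => ?_) (M.tendsto_evalProb_not_isRecurrent q)
  rw [evalProb_eq_sum, evalProb_eq_sum]
  refine sum_le_sum fun g _ => ?_
  by_cases hg : M.IsRecurrent g ∧ g ∈ S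
  · rw [M.evalProb_eq_zero_of_tendsto_delta hδ hg.2 hg.1 n, zero_mul, zero_mul]
  · refine mul_le_mul_of_nonneg_left ?_ (M.evalProb_nonneg _ _ _)
    by_cases hgS : g ∈ S
    · have hgT : g ∈ {g | ¬ M.IsRecurrent g} := fun hrec => hg ⟨hrec, hgS⟩
      rw [Set.indicator_of_mem hgS, Set.indicator_of_mem hgT]
    · simp [hgS, Set.indicator_nonneg]

end Dynamics

end DFA

theorem IsRegularLang.tendsto_mu_of_tendsto_delta {A : Type*} [Fintype A] [Nonempty A]
    {L : Set (List A)} (hL : IsRegularLang L) (h : Tendsto (delta L) atTop (𝓝 0)) :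
    Tendsto (mu L) atTop (𝓝 0) := by
  obtain ⟨σ, _, M, rfl⟩ := hL
  exact M.tendsto_evalProb_of_tendsto_delta h

theorem robustness_of_pEquiv {A : Type*} [Fintype A] [Nonempty A] (L : Set (List A))
    (hL : IsRegularLang L) :
    [Filter.Tendsto (mu L) Filter.atTop (nhds (0 : ℝ)),
     Filter.Tendsto (muStar L) Filter.atTop (nhds (0 : ℝ)),
     Filter.Tendsto (delta L) Filter.atTop (nhds (0 : ℝ))].TFAE := by
  tfae_have 1 → 2 := tendsto_muStar_of_tendsto_mu
  tfae_have 2 → 3 := tendsto_delta_of_tendsto_muStar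
  tfae_have 3 → 1 := hL.tendsto_mu_of_tendsto_delta
  tfae_finish
end

section
/- For any unary NFAs 𝒜₁ and 𝒜₂, with state sets Q₁ and Q₂ respectively, L(𝒜₁) is not p-equivalent to L(𝒜₂) if and only if there exists n ∈ ℕ such that 2^{|Q₁|+|Q₂|} ≤ n < 2^{1+|Q₁|+|Q₂|} and the string 0ⁿ belongs to L(𝒜₁) △ L(𝒜₂). -/
open Filter

/-!
Over a one-letter alphabet `mu L n` is just the indicator of `0ⁿ ∈ L`, so `L(𝒜₁)` and `L(𝒜₂)`
fail to be p-equivalent iff `0ⁿ ∈ L(𝒜₁) △ L(𝒜₂)` for infinitely many `n`. Whether `0ⁿ` lies in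
the symmetric difference depends only on the pair of state sets reached by the two subset
constructions after `n` steps, i.e. on the `n`-th point of an orbit of a self-map of a set of size
`N = 2 ^ (|Q₁| + |Q₂|)`. Such an orbit has preperiod plus period at most `N`, so it visits a
given set of pairs infinitely often iff it does so at some time in `[N, 2N)`.
-/

theorem List.length_eq_iff_eq_replicate_unit {s : List Unit} {n : ℕ} :
    s.length = n ↔ s = List.replicate n () := by
  simp [List.eq_replicate_iff]

open scoped Classical in
theorem mu_unit (L : Set (List Unit)) (n : ℕ) :
    mu L n = if List.replicate n () ∈ L then 1 else 0 := by
  simp only [mu, List.length_eq_iff_eq_replicate_unit, Fintype.card_unit, Nat.cast_one, one_pow,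
    div_one]
  split_ifs with h
  · have : Nat.card {s : List Unit // s = List.replicate n () ∧ s ∈ L} = 1 :=
      Nat.card_eq_one_iff_exists.2 ⟨⟨_, rfl, h⟩, fun ⟨_, hs, _⟩ => Subtype.ext hs⟩
    simp [this]
  · have : IsEmpty {s : List Unit // s = List.replicate n () ∧ s ∈ L} :=
      ⟨fun ⟨s, hs, hL⟩ => h (hs ▸ hL)⟩
    simp

theorem tendsto_mu_unit_zero_iff (L : Set (List Unit)) :
    Tendsto (mu L) atTop (nhds 0) ↔ ∀ᶠ n in atTop, List.replicate n () ∉ L := by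
  constructor
  · intro h
    filter_upwards [h.eventually_lt_const one_pos] with n hn hL
    simp [mu_unit, hL] at hn
  · intro h
    refine tendsto_const_nhds.congr' ?_
    filter_upwards [h] with n hn
    simp [mu_unit, hn]

theorem Nat.frequently_atTop_iff_exists_Ico_of_periodic {P : ℕ → Prop} {i p m : ℕ} (hp : 0 < p)
    (hper : ∀ n, i ≤ n → (P (n + p) ↔ P n)) (hm : i ≤ m) :
    (∃ᶠ n in atTop, P n) ↔ ∃ n ∈ Set.Ico m (m + p), P n := by
  have hper_mul : ∀ k n, i ≤ n → (P (n + k * p) ↔ P n) := by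
    intro k
    induction k with
    | zero => simp
    | succ k ih =>
      intro n hn
      rw [add_one_mul, ← add_assoc, hper _ (by omega), ih n hn]
  constructor
  · intro h
    obtain ⟨n₀, hn₀, hP⟩ := frequently_atTop.1 h m
    have hdecomp : n₀ = m + (n₀ - m) % p + (n₀ - m) / p * p := by
      have := Nat.mod_add_div (n₀ - m) p
      rw [mul_comm] at this
      omega
    refine ⟨m + (n₀ - m) % p, ⟨by omega, by have := Nat.mod_lt (n₀ - m) hp; omega⟩, ?_⟩
    rwa [← hper_mul _ _ (by omega), ← hdecomp]
  · rintro ⟨n, hn, hP⟩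
    refine frequently_atTop.2 fun c =>
      ⟨n + c * p, (Nat.le_mul_of_pos_right c hp).trans (Nat.le_add_left _ _), ?_⟩
    rwa [hper_mul c n (hm.trans hn.1)]

theorem Function.exists_isPeriodicPt_iterate {α : Type*} [Fintype α] (g : α → α) (x : α) :
    ∃ i p, 0 < p ∧ i + p ≤ Fintype.card α ∧ IsPeriodicPt g p (g^[i] x) := by
  have of_eq {a b : ℕ} (hab : a < b) (heq : g^[a] x = g^[b] x) :
      IsPeriodicPt g (b - a) (g^[a] x) := by
    rw [IsPeriodicPt, IsFixedPt, ← iterate_add_apply, Nat.sub_add_cancel hab.le, heq]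
  obtain ⟨a, b, hab, heq⟩ := Fintype.exists_ne_map_eq_of_card_lt
    (fun k : Fin (Fintype.card α + 1) => g^[k] x) (by simp)
  rcases lt_or_gt_of_ne (Fin.val_ne_of_ne hab) with hlt | hlt
  · exact ⟨a, b - a, by omega, by omega, of_eq hlt heq⟩
  · exact ⟨b, a - b, by omega, by omega, of_eq hlt heq.symm⟩

theorem Function.frequently_iterate_iff_exists_mem_Ico_card {α : Type*} [Fintype α] (g : α → α)
    (x : α) (Q : α → Prop) :
    (∃ᶠ n in atTop, Q (g^[n] x)) ↔
      ∃ n ∈ Set.Ico (Fintype.card α) (2 * Fintype.card α), Q (g^[n] x) := by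
  obtain ⟨i, p, hp, hipN, hperiodic⟩ := exists_isPeriodicPt_iterate g x
  have hper (n : ℕ) (hn : i ≤ n) : Q (g^[n + p] x) ↔ Q (g^[n] x) := by
    have hy : IsPeriodicPt g p (g^[n] x) := by
      rw [← Nat.sub_add_cancel hn, iterate_add_apply]
      exact hperiodic.apply_iterate _
    rw [add_comm, iterate_add_apply, hy.eq]
  constructor
  · intro h
    obtain ⟨n, hn, hQ⟩ :=
      (Nat.frequently_atTop_iff_exists_Ico_of_periodic hp hper (m := Fintype.card α)
        (by omega)).1 h
    exact ⟨n, ⟨hn.1, by have := hn.2; omega⟩, hQ⟩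
  · rintro ⟨n, ⟨hn, -⟩, hQ⟩
    exact (Nat.frequently_atTop_iff_exists_Ico_of_periodic hp hper (by omega : i ≤ n)).2
      ⟨n, ⟨le_rfl, by omega⟩, hQ⟩

theorem NFA.evalFrom_replicate {α σ : Type*} (M : NFA α σ) (S : Set σ) (a : α) (n : ℕ) :
    M.evalFrom S (List.replicate n a) = (M.stepSet · a)^[n] S := by
  induction n with
  | zero => rfl
  | succ n ih =>
    rw [List.replicate_succ', NFA.evalFrom_append, NFA.evalFrom_singleton, ih,
      Function.iterate_succ_apply']

theorem unary_nfa_pEquiv_iff {σ₁ σ₂ : Type*} [Fintype σ₁] [Fintype σ₂]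
    (M₁ : NFA Unit σ₁) (M₂ : NFA Unit σ₂) :
    ¬ pEquiv {s : List Unit | s ∈ M₁.accepts} {s : List Unit | s ∈ M₂.accepts} ↔
      ∃ n : ℕ,
        2 ^ (Fintype.card σ₁ + Fintype.card σ₂) ≤ n ∧
        n < 2 ^ (1 + Fintype.card σ₁ + Fintype.card σ₂) ∧
        List.replicate n () ∈
          sdiffL {s : List Unit | s ∈ M₁.accepts} {s : List Unit | s ∈ M₂.accepts} := by
  set g := Prod.map (M₁.stepSet · ()) (M₂.stepSet · ())
  set Q : Set σ₁ × Set σ₂ → Prop := fun S =>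
    Xor (∃ q ∈ M₁.accept, q ∈ S.1) (∃ q ∈ M₂.accept, q ∈ S.2)
  have hmem (n : ℕ) : List.replicate n () ∈
      sdiffL {s : List Unit | s ∈ M₁.accepts} {s : List Unit | s ∈ M₂.accepts} ↔
      Q (g^[n] (M₁.start, M₂.start)) := by
    simp only [g, Prod.map_iterate, Prod.map_apply, ← NFA.evalFrom_replicate]
    rfl
  have hcard : Fintype.card (Set σ₁ × Set σ₂) = 2 ^ (Fintype.card σ₁ + Fintype.card σ₂) := by
    rw [Fintype.card_prod, Fintype.card_set, Fintype.card_set, pow_add]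
  rw [pEquiv, tendsto_mu_unit_zero_iff, not_eventually]
  simp only [not_not, hmem]
  rw [Function.frequently_iterate_iff_exists_mem_Ico_card, hcard, add_assoc, pow_add 2 1, pow_one]
  simp only [Set.mem_Ico, and_assoc]
end
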